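/- Let G be a cubic graph with a complete cycle group C, and suppose a new edge is inserted by subdividing two edges e1 and e2 that lie on the same cycle of C and joining the two new subdivision vertices by an edge. Then the resulting graph is cubic and admits a complete cycle group: the cycle containing e1 and e2 splits (or extends) so that both new degree-3 vertices lie on even cycles covering all vertices. -/

import Mathlib

open SimpleGraph

/-- A cycle in a simple graph `G`, given as a closed walk that is a cycle. -/
structure GraphCycle {V : Type*} (G : SimpleGraph V) where
  base : V
  walk : G.Walk base base
  isCycle : walk.IsCycle

/-- A graph is cubic (3-regular) if every vertex has exactly 3 neighbours. -/
def IsCubic {V : Type*} (G : SimpleGraph V) : Prop :=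
  ∀ v : V, (G.neighborSet v).ncard = 3

/-- A complete cycle group (CCG) for `G`: a set of even cycles such that every vertex
lies on exactly one cycle of the set (hence the cycles are pairwise vertex-disjoint
and cover all vertices). -/
def IsCCG {V : Type*} (G : SimpleGraph V) (C : Set (GraphCycle G)) : Prop :=
  (∀ c ∈ C, Even c.walk.length) ∧
  ∀ v : V, ∃! c : GraphCycle G, c ∈ C ∧ v ∈ c.walk.support

/-- A proper edge colouring of `G` with `n` colours: distinct edges of `G` sharing a
vertex receive distinct colours. -/
def ProperEdgeColoring {V : Type*} (G : SimpleGraph V) (n : ℕ) (f : Sym2 V → Fin n) : Prop :=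
  ∀ e₁ ∈ G.edgeSet, ∀ e₂ ∈ G.edgeSet, e₁ ≠ e₂ → (∃ v : V, v ∈ e₁ ∧ v ∈ e₂) → f e₁ ≠ f e₂

/-!
Subdividing an edge of a cycle lengthens it by one, so subdividing two edges of the same even
cycle `c₀` keeps it even. Every other cycle of `C` is vertex-disjoint from `c₀`, hence avoids
both subdivided edges and survives unchanged; the subdivided cycles therefore form a complete
cycle group of the new graph, with the inserted edge lying on none of them. Cubicity holds because
each old vertex just trades a neighbour across a subdivided edge for the subdivision vertex.
-/

open Sum

namespace SimpleGraph

variable {V : Type*} (G : SimpleGraph V) (u₁ v₁ u₂ v₂ : V)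

def insertEdge : SimpleGraph (V ⊕ Fin 2) :=
  fromEdgeSet ((Sym2.map inl '' (G.edgeSet \ {s(u₁, v₁), s(u₂, v₂)})) ∪
    {s(inl u₁, inr 0), s(inl v₁, inr 0), s(inl u₂, inr 1), s(inl v₂, inr 1), s(inr 0, inr 1)})

variable {G u₁ v₁ u₂ v₂}

@[simp]
lemma insertEdge_adj_inl_inl {a b : V} :
    (G.insertEdge u₁ v₁ u₂ v₂).Adj (inl a) (inl b) ↔
      G.Adj a b ∧ s(a, b) ≠ s(u₁, v₁) ∧ s(a, b) ≠ s(u₂, v₂) := by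
  simp only [insertEdge, fromEdgeSet_adj, ← Sym2.map_mk, Set.mem_union, Set.mem_image,
    (Sym2.map.injective inl_injective).eq_iff, exists_eq_right]
  simp
  exact fun h _ _ _ _ => h.ne

@[simp]
lemma insertEdge_adj_inl_inr_zero {a : V} :
    (G.insertEdge u₁ v₁ u₂ v₂).Adj (inl a) (inr 0) ↔ a ∈ s(u₁, v₁) := by
  simp [insertEdge, Sym2.exists]

@[simp]
lemma insertEdge_adj_inl_inr_one {a : V} :
    (G.insertEdge u₁ v₁ u₂ v₂).Adj (inl a) (inr 1) ↔ a ∈ s(u₂, v₂) := by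
  simp [insertEdge, Sym2.exists]

@[simp]
lemma insertEdge_adj_inr_inr {i j : Fin 2} :
    (G.insertEdge u₁ v₁ u₂ v₂).Adj (inr i) (inr j) ↔ i ≠ j := by
  simp [insertEdge, Sym2.exists]
  omega

lemma insertEdge_adj_inl_inr_zero_of_mk_eq {a x : V} (h : s(a, x) = s(u₁, v₁)) :
    (G.insertEdge u₁ v₁ u₂ v₂).Adj (inl a) (inr 0) :=
  insertEdge_adj_inl_inr_zero.mpr (h ▸ Sym2.mem_mk_left a x)

lemma insertEdge_adj_inl_inr_one_of_mk_eq {a x : V} (h : s(a, x) = s(u₂, v₂)) :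
    (G.insertEdge u₁ v₁ u₂ v₂).Adj (inl a) (inr 1) :=
  insertEdge_adj_inl_inr_one.mpr (h ▸ Sym2.mem_mk_left a x)

lemma neighborSet_insertEdge_inr_zero :
    (G.insertEdge u₁ v₁ u₂ v₂).neighborSet (inr 0) = {inl u₁, inl v₁, inr 1} := by
  ext (b | i)
  · rw [mem_neighborSet, adj_comm]
    simp
  · fin_cases i <;> simp

lemma neighborSet_insertEdge_inr_one :
    (G.insertEdge u₁ v₁ u₂ v₂).neighborSet (inr 1) = {inl u₂, inl v₂, inr 0} := by
  ext (b | i)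
  · rw [mem_neighborSet, adj_comm]
    simp
  · fin_cases i <;> simp

lemma exists_adj_mk_eq_iff_mem {w : V} {e : Sym2 V} (he : e ∈ G.edgeSet) :
    (∃ z, G.Adj w z ∧ s(w, z) = e) ↔ w ∈ e := by
  refine ⟨fun ⟨z, _, hz⟩ => hz ▸ Sym2.mem_mk_left w z, fun hw => ?_⟩
  obtain ⟨z, rfl⟩ := Sym2.mem_iff_exists.mp hw
  exact ⟨z, he, rfl⟩

variable (u₁ v₁ u₂ v₂) in
open Classical in
noncomputable def insertEdgeNeighbor (w z : V) : V ⊕ Fin 2 :=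
  if s(w, z) = s(u₁, v₁) then inr 0 else if s(w, z) = s(u₂, v₂) then inr 1 else inl z

lemma insertEdgeNeighbor_injective (w : V) :
    Function.Injective (insertEdgeNeighbor u₁ v₁ u₂ v₂ w) := by
  intro z z' h
  unfold insertEdgeNeighbor at h
  split_ifs at h <;> grind [Sym2.congr_right]

lemma insertEdgeNeighbor_eq_inl {w z b : V} :
    insertEdgeNeighbor u₁ v₁ u₂ v₂ w z = inl b ↔
      s(w, z) ≠ s(u₁, v₁) ∧ s(w, z) ≠ s(u₂, v₂) ∧ z = b := by
  unfold insertEdgeNeighbor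
  split_ifs <;> simp [*]

lemma insertEdgeNeighbor_eq_inr_zero {w z : V} :
    insertEdgeNeighbor u₁ v₁ u₂ v₂ w z = inr 0 ↔ s(w, z) = s(u₁, v₁) := by
  unfold insertEdgeNeighbor
  split_ifs with h₁ <;> simp [h₁]

lemma insertEdgeNeighbor_eq_inr_one (hne : s(u₁, v₁) ≠ s(u₂, v₂)) {w z : V} :
    insertEdgeNeighbor u₁ v₁ u₂ v₂ w z = inr 1 ↔ s(w, z) = s(u₂, v₂) := by
  unfold insertEdgeNeighbor
  split_ifs <;> simp [*]

lemma image_insertEdgeNeighbor (h₁ : G.Adj u₁ v₁) (h₂ : G.Adj u₂ v₂)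
    (hne : s(u₁, v₁) ≠ s(u₂, v₂)) (w : V) :
    insertEdgeNeighbor u₁ v₁ u₂ v₂ w '' G.neighborSet w =
      (G.insertEdge u₁ v₁ u₂ v₂).neighborSet (inl w) := by
  ext (b | i)
  · simp only [Set.mem_image, mem_neighborSet, insertEdgeNeighbor_eq_inl, insertEdge_adj_inl_inl]
    constructor
    · rintro ⟨z, hz, h₁, h₂, rfl⟩
      exact ⟨hz, h₁, h₂⟩
    · rintro ⟨hb, h₁, h₂⟩
      exact ⟨b, hb, h₁, h₂, rfl⟩
  · fin_cases i
    · simpa [insertEdgeNeighbor_eq_inr_zero] using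
        exists_adj_mk_eq_iff_mem (G.mem_edgeSet.mpr h₁)
    · simpa [insertEdgeNeighbor_eq_inr_one hne] using
        exists_adj_mk_eq_iff_mem (G.mem_edgeSet.mpr h₂)

namespace Walk

lemma IsPath.cons_cons_isCycle {W : Type*} {H : SimpleGraph W} {a n x : W}
    {q : H.Walk x a} (hq : q.IsPath) (hn : n ∉ q.support) (hax : a ≠ x) (han : H.Adj a n)
    (hnx : H.Adj n x) : (cons han (cons hnx q)).IsCycle := by
  refine (cons_isCycle_iff _ _).mpr ⟨(cons_isPath_iff _ _).mpr ⟨hq, hn⟩, ?_⟩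
  simp only [edges_cons, List.mem_cons, not_or, Sym2.eq_iff, and_true]
  exact ⟨⟨fun h => hax (h.1.trans h.2), hax⟩, mt (snd_mem_support_of_mem_edges q) hn⟩

variable (u₁ v₁ u₂ v₂) in
open Classical in
noncomputable def subdivide :
    ∀ {a b : V}, G.Walk a b → (G.insertEdge u₁ v₁ u₂ v₂).Walk (inl a) (inl b)
  | _, _, .nil => .nil
  | a, _, .cons (v := x) h p =>
    if h₁ : s(a, x) = s(u₁, v₁) then
      .cons (insertEdge_adj_inl_inr_zero_of_mk_eq h₁)
        (.cons (insertEdge_adj_inl_inr_zero_of_mk_eq (Sym2.eq_swap.trans h₁)).symm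
          (subdivide p))
    else if h₂ : s(a, x) = s(u₂, v₂) then
      .cons (insertEdge_adj_inl_inr_one_of_mk_eq h₂)
        (.cons (insertEdge_adj_inl_inr_one_of_mk_eq (Sym2.eq_swap.trans h₂)).symm
          (subdivide p))
    else
      .cons (insertEdge_adj_inl_inl.mpr ⟨h, h₁, h₂⟩) (subdivide p)

variable {a b : V}

lemma inl_mem_support_subdivide {v : V} (p : G.Walk a b) :
    inl v ∈ (p.subdivide u₁ v₁ u₂ v₂).support ↔ v ∈ p.support := by
  induction p with
  | nil => simp [subdivide]
  | cons h p ih => rw [subdivide]; split_ifs <;> simp [ih]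

lemma inr_zero_mem_support_subdivide (p : G.Walk a b) :
    inr 0 ∈ (p.subdivide u₁ v₁ u₂ v₂).support ↔ s(u₁, v₁) ∈ p.edges := by
  induction p with
  | nil => simp [subdivide]
  | cons h p ih =>
    rw [subdivide]
    split_ifs with h₁ h₂
    · simp [h₁]
    · simp [-Sym2.eq, ih, Ne.symm h₁]
    · simp [-Sym2.eq, ih, Ne.symm h₁]

lemma inr_one_mem_support_subdivide (hne : s(u₁, v₁) ≠ s(u₂, v₂)) (p : G.Walk a b) :
    inr 1 ∈ (p.subdivide u₁ v₁ u₂ v₂).support ↔ s(u₂, v₂) ∈ p.edges := by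
  induction p with
  | nil => simp [subdivide]
  | cons h p ih =>
    rw [subdivide]
    split_ifs with h₁ h₂
    · simp [-Sym2.eq, ih, h₁, hne.symm]
    · simp [h₂]
    · simp [-Sym2.eq, ih, Ne.symm h₂]

lemma mk_mem_edges_of_inl_mem_edges_subdivide {p : G.Walk a b} {x y : V}
    (h : s(inl x, inl y) ∈ (p.subdivide u₁ v₁ u₂ v₂).edges) : s(x, y) ∈ p.edges := by
  induction p with
  | nil => simp [subdivide] at h
  | cons h p ih =>
    rw [subdivide] at h
    split_ifs at h <;> simp at h ⊢ <;> tauto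

lemma length_subdivide [DecidableEq V] (hne : s(u₁, v₁) ≠ s(u₂, v₂)) (p : G.Walk a b) :
    (p.subdivide u₁ v₁ u₂ v₂).length =
      p.length + p.edges.count s(u₁, v₁) + p.edges.count s(u₂, v₂) := by
  induction p with
  | nil => simp [subdivide]
  | cons h p ih =>
    rw [subdivide]
    split_ifs with h₁ h₂
    · simp [-Sym2.eq, ih, h₁, hne]
      omega
    · simp [-Sym2.eq, ih, h₂, hne.symm]
      omega
    · simp [-Sym2.eq, ih, h₁, h₂]
      omega

lemma IsPath.subdivide {p : G.Walk a b} (hp : p.IsPath) :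
    (p.subdivide u₁ v₁ u₂ v₂).IsPath := by
  induction p with
  | nil => exact .nil
  | @cons a x _ h p ih =>
    obtain ⟨hp, ha⟩ := (cons_isPath_iff _ _).mp hp
    have hmk : s(a, x) ∉ p.edges := fun h => ha (p.fst_mem_support_of_mem_edges h)
    rw [Walk.subdivide]
    split_ifs with h₁ h₂
    · simp [ih hp, inl_mem_support_subdivide, inr_zero_mem_support_subdivide, ha, ← h₁, hmk]
    · simp [ih hp, inl_mem_support_subdivide,
        inr_one_mem_support_subdivide (fun h => h₁ (h₂.trans h.symm)), ha, ← h₂, hmk]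
    · simp [ih hp, inl_mem_support_subdivide, ha]

lemma IsCycle.subdivide {p : G.Walk a a} (hp : p.IsCycle) :
    (p.subdivide u₁ v₁ u₂ v₂).IsCycle := by
  cases p with
  | nil => exact absurd rfl hp.ne_nil
  | @cons _ x _ h p =>
    obtain ⟨hp, hmk⟩ := (cons_isCycle_iff _ _).mp hp
    have hax : (inl a : V ⊕ Fin 2) ≠ inl x := inl_injective.ne h.ne
    rw [Walk.subdivide]
    split_ifs with h₁ h₂
    · exact hp.subdivide.cons_cons_isCycle
        (by rwa [inr_zero_mem_support_subdivide, ← h₁]) hax _ _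
    · exact hp.subdivide.cons_cons_isCycle
        (by rwa [inr_one_mem_support_subdivide (fun h => h₁ (h₂.trans h.symm)), ← h₂]) hax _ _
    · exact (cons_isCycle_iff _ _).mpr
        ⟨hp.subdivide, fun h => hmk (mk_mem_edges_of_inl_mem_edges_subdivide h)⟩

end Walk

end SimpleGraph

section

variable {V : Type*} {G : SimpleGraph V} {u₁ v₁ u₂ v₂ : V}

theorem IsCubic.insertEdge (hG : IsCubic G) (h₁ : G.Adj u₁ v₁) (h₂ : G.Adj u₂ v₂)
    (hne : s(u₁, v₁) ≠ s(u₂, v₂)) : IsCubic (G.insertEdge u₁ v₁ u₂ v₂) := by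
  refine Sum.forall.mpr ⟨fun w => ?_, Fin.forall_fin_two.mpr ⟨?_, ?_⟩⟩
  · rw [← image_insertEdgeNeighbor h₁ h₂ hne,
      Set.ncard_image_of_injective _ (insertEdgeNeighbor_injective w), hG w]
  · rw [neighborSet_insertEdge_inr_zero]
    exact Set.ncard_eq_three.mpr ⟨_, _, _, by simpa using h₁.ne, by simp, by simp, rfl⟩
  · rw [neighborSet_insertEdge_inr_one]
    exact Set.ncard_eq_three.mpr ⟨_, _, _, by simpa using h₂.ne, by simp, by simp, rfl⟩

variable (u₁ v₁ u₂ v₂) in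
noncomputable def GraphCycle.subdivide (c : GraphCycle G) :
    GraphCycle (G.insertEdge u₁ v₁ u₂ v₂) :=
  ⟨inl c.base, c.walk.subdivide u₁ v₁ u₂ v₂, c.isCycle.subdivide⟩

lemma existsUnique_mem_image {α β : Type*} {f : α → β} {s : Set α} {p : α → Prop}
    {q : β → Prop} (h : ∀ a ∈ s, q (f a) ↔ p a) (hp : ∃! a, a ∈ s ∧ p a) :
    ∃! b, b ∈ f '' s ∧ q b := by
  obtain ⟨a, ⟨ha, hpa⟩, huniq⟩ := hp
  refine ⟨f a, ⟨⟨a, ha, rfl⟩, (h a ha).2 hpa⟩, ?_⟩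
  rintro _ ⟨⟨a', ha', rfl⟩, hq⟩
  rw [huniq a' ⟨ha', (h a' ha').1 hq⟩]

variable {C : Set (GraphCycle G)} {c₀ : GraphCycle G}

lemma IsCCG.eq_of_mem_edges (hC : IsCCG G C) {c c' : GraphCycle G} (hc : c ∈ C) (hc' : c' ∈ C)
    {x y : V} (he : s(x, y) ∈ c.walk.edges) (he' : s(x, y) ∈ c'.walk.edges) : c = c' :=
  (hC.2 x).unique ⟨hc, c.walk.fst_mem_support_of_mem_edges he⟩
    ⟨hc', c'.walk.fst_mem_support_of_mem_edges he'⟩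

lemma IsCCG.existsUnique_mem_edges (hC : IsCCG G C) (hc₀ : c₀ ∈ C) {x y : V}
    (he : s(x, y) ∈ c₀.walk.edges) : ∃! c, c ∈ C ∧ s(x, y) ∈ c.walk.edges :=
  ⟨c₀, ⟨hc₀, he⟩, fun _ ⟨hc, h⟩ => hC.eq_of_mem_edges hc hc₀ h he⟩

theorem IsCCG.insertEdge (hC : IsCCG G C) (hc₀ : c₀ ∈ C) (he₁ : s(u₁, v₁) ∈ c₀.walk.edges)
    (he₂ : s(u₂, v₂) ∈ c₀.walk.edges) (hne : s(u₁, v₁) ≠ s(u₂, v₂)) :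
    IsCCG (G.insertEdge u₁ v₁ u₂ v₂) (GraphCycle.subdivide u₁ v₁ u₂ v₂ '' C) := by
  classical
  refine ⟨?_, Sum.forall.mpr ⟨fun v => ?_, Fin.forall_fin_two.mpr ⟨?_, ?_⟩⟩⟩
  · rintro _ ⟨c, hc, rfl⟩
    rw [GraphCycle.subdivide, Walk.length_subdivide hne]
    by_cases h : c = c₀
    · subst h
      rw [c.isCycle.isTrail.count_edges_eq_one he₁, c.isCycle.isTrail.count_edges_eq_one he₂]
      exact (hC.1 c hc).add_one.add_one
    · rw [List.count_eq_zero.mpr fun h' => h (hC.eq_of_mem_edges hc hc₀ h' he₁),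
        List.count_eq_zero.mpr fun h' => h (hC.eq_of_mem_edges hc hc₀ h' he₂)]
      exact hC.1 c hc
  · exact existsUnique_mem_image (fun c _ => Walk.inl_mem_support_subdivide c.walk) (hC.2 v)
  · exact existsUnique_mem_image (fun c _ => Walk.inr_zero_mem_support_subdivide c.walk)
      (hC.existsUnique_mem_edges hc₀ he₁)
  · exact existsUnique_mem_image (fun c _ => Walk.inr_one_mem_support_subdivide hne c.walk)
      (hC.existsUnique_mem_edges hc₀ he₂)

end

/-- Edge insertion (H-insertion): let `G` be a cubic graph with a complete cycle group `C`
and let `e₁ = s(u₁,v₁)` and `e₂ = s(u₂,v₂)` be two distinct edges lying on the same cycle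
`c₀` of `C`.  Subdivide `e₁` and `e₂` by new vertices (`Sum.inr 0` and `Sum.inr 1`) and join
the two new vertices by a new edge.  Then the resulting graph `G'` is cubic and admits a
complete cycle group (even cycles covering all vertices, in particular the two new
degree-3 vertices). -/
theorem stmt12 {V : Type*} (G : SimpleGraph V) (hG : IsCubic G)
    (C : Set (GraphCycle G)) (hC : IsCCG G C)
    (c₀ : GraphCycle G) (hc₀ : c₀ ∈ C)
    (u₁ v₁ u₂ v₂ : V)
    (he₁ : s(u₁, v₁) ∈ c₀.walk.edges) (he₂ : s(u₂, v₂) ∈ c₀.walk.edges)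
    (hne : s(u₁, v₁) ≠ s(u₂, v₂))
    (G' : SimpleGraph (V ⊕ Fin 2))
    (hG' : G' = SimpleGraph.fromEdgeSet
      ((Sym2.map Sum.inl '' (G.edgeSet \ {s(u₁, v₁), s(u₂, v₂)})) ∪
        {s(Sum.inl u₁, Sum.inr 0), s(Sum.inl v₁, Sum.inr 0),
         s(Sum.inl u₂, Sum.inr 1), s(Sum.inl v₂, Sum.inr 1),
         s(Sum.inr 0, Sum.inr 1)})) :
    IsCubic G' ∧ ∃ C' : Set (GraphCycle G'), IsCCG G' C' := by
  subst hG'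
  have h₁ : G.Adj u₁ v₁ := c₀.walk.adj_of_mem_edges he₁
  have h₂ : G.Adj u₂ v₂ := c₀.walk.adj_of_mem_edges he₂
  exact ⟨hG.insertEdge h₁ h₂ hne, _, hC.insertEdge hc₀ he₁ he₂ hne⟩
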